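/- Let n_1, …, n_r be positive integers each dividing n! for a fixed n, and suppose Π_{i=1}^r gcd(k, n_i) = Π_{i=1}^r gcd(l, n_i) does NOT in general imply gcd(k, n_i) = gcd(l, n_i) for each i; however, if additionally the multiset isomorphism of groups Π_i Z/gcd(k, n_i) ≅ Π_i Z/gcd(l, n_i) holds, then gcd(k, lcm(n_1,…,n_r)) = gcd(l, lcm(n_1,…,n_r)). -/

import Mathlib

/-!
The exponent of `∏ᵢ ℤ/aᵢ` is `lcm aᵢ`, and isomorphic groups have the same exponent, so
`lcm_i gcd(k,nᵢ) = lcm_i gcd(l,nᵢ)`. Taking `p`-adic valuations turns the lcm into a maximum,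
and since `min` distributes over `max` on valuations, `gcd(k, lcm nᵢ) = lcm_i gcd(k,nᵢ)`.
-/

open Finset

theorem Nat.gcd_finset_lcm {ι : Type*} (a : ℕ) (s : Finset ι) {f : ι → ℕ}
    (hf : ∀ i ∈ s, f i ≠ 0) : Nat.gcd a (s.lcm f) = s.lcm fun i => Nat.gcd a (f i) := by
  rcases eq_or_ne a 0 with rfl | ha
  · simp
  have hlcm : s.lcm f ≠ 0 := by simpa [Finset.lcm_eq_zero_iff] using hf
  have hgcd : ∀ i ∈ s, Nat.gcd a (f i) ≠ 0 := fun i _ => Nat.gcd_ne_zero_left ha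
  refine Nat.eq_of_factorization_eq (Nat.gcd_ne_zero_left ha)
    (by simpa [Finset.lcm_eq_zero_iff] using hgcd) fun p => ?_
  rw [Nat.factorization_gcd ha hlcm, Finsupp.inf_apply, Finset.factorization_lcm hf,
    Finset.factorization_lcm hgcd, Finset.sup_inf_distrib_left]
  refine Finset.sup_congr rfl fun i hi => ?_
  rw [Nat.factorization_gcd ha (hf i hi), Finsupp.inf_apply]

theorem Finset.lcm_eq_of_pi_zmod_addEquiv {ι : Type*} [Fintype ι] {a b : ι → ℕ}
    (e : (∀ i, ZMod (a i)) ≃+ (∀ i, ZMod (b i))) : univ.lcm a = univ.lcm b := by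
  simpa only [AddMonoid.exponent_pi, ZMod.exponent] using AddMonoid.exponent_eq_of_addEquiv e

theorem stmt_13_general (r : ℕ) (n : Fin r → ℕ) (hn : ∀ i, 0 < n i)
    (k l : ℤ)
    (h : Nonempty ((∀ i, ZMod (Int.gcd k (n i))) ≃+ (∀ i, ZMod (Int.gcd l (n i))))) :
    (∀ p : ℕ, p.Prime →
      (Finset.univ.sup fun i => (Int.gcd k (n i)).factorization p) =
        (Finset.univ.sup fun i => (Int.gcd l (n i)).factorization p)) ∧
    Int.gcd k (Finset.univ.lcm n : ℕ) = Int.gcd l (Finset.univ.lcm n : ℕ) := by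
  obtain ⟨e⟩ := h
  have hlcm := lcm_eq_of_pi_zmod_addEquiv e
  have hn0 : ∀ i ∈ univ, n i ≠ 0 := fun i _ => (hn i).ne'
  have hgcd (m : ℤ) : ∀ i ∈ univ, Int.gcd m (n i) ≠ 0 := fun i _ =>
    Nat.gcd_ne_zero_right (hn0 i (mem_univ i))
  refine ⟨fun p _ => ?_, ?_⟩
  · rw [← factorization_lcm (hgcd k), ← factorization_lcm (hgcd l), hlcm]
  · simpa only [Int.gcd, Int.natAbs_natCast, Nat.gcd_finset_lcm _ _ hn0] using hlcm

/-- Let `n₁, …, n_r` be positive integers each dividing `N!`. If the products of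
cyclic groups `∏ᵢ ℤ/gcd(k,nᵢ)` and `∏ᵢ ℤ/gcd(l,nᵢ)` are isomorphic as abelian
groups, then for every prime `p` the maximal `p`-adic valuations agree,
`max_i v_p(gcd(k,nᵢ)) = max_i v_p(gcd(l,nᵢ))`, and hence
`gcd(k, lcm(n₁,…,n_r)) = gcd(l, lcm(n₁,…,n_r))`. -/
theorem stmt_13 (r N : ℕ) (n : Fin r → ℕ) (hn : ∀ i, 0 < n i)
    (hdvd : ∀ i, n i ∣ Nat.factorial N) (k l : ℤ)
    (h : Nonempty ((∀ i, ZMod (Int.gcd k (n i))) ≃+ (∀ i, ZMod (Int.gcd l (n i))))) :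
    (∀ p : ℕ, p.Prime →
      (Finset.univ.sup fun i => (Int.gcd k (n i)).factorization p) =
        (Finset.univ.sup fun i => (Int.gcd l (n i)).factorization p)) ∧
    Int.gcd k (Finset.univ.lcm n : ℕ) = Int.gcd l (Finset.univ.lcm n : ℕ) :=
  stmt_13_general r n hn k l h
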